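/- If $\ell\in\{1,\dots,m\}$ satisfies $\ell^+=m+1$ (i.e. $i_\ell$ does not occur in $\mathbf{i}$ after position $\ell$), then $\varphi'_\mathbf{i}(\varepsilon_\ell)=\mathbf{a}_{\omega_{i_\ell}}$. -/

import Mathlib

open Finset

/-- The weight lattice `𝒫`: the free abelian group with basis `{αᵢ, ωᵢ : i ∈ I}`,
represented by pairs of coefficient vectors (first component: coefficients of the `αᵢ`,
second component: coefficients of the `ωᵢ`). -/
abbrev PLat (n : ℕ) := (Fin n → ℤ) × (Fin n → ℤ)

/-- The coroot lattice `𝒬^∨`: the free abelian group with basis `{αᵢ^∨ : i ∈ I}`,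
represented by coefficient vectors. -/
abbrev QvLat (n : ℕ) := Fin n → ℤ

variable {n : ℕ}

/-- The basis element `α_j^∨` of `𝒬^∨`. -/
def coroot (j : Fin n) : QvLat n := fun k => if k = j then 1 else 0

/-- The basis element `α_j` of `𝒫`. -/
def alP (j : Fin n) : PLat n := (fun k => if k = j then 1 else 0, 0)

/-- The basis element `ω_j` of `𝒫`. -/
def omP (j : Fin n) : PLat n := (0, fun k => if k = j then 1 else 0)

/-- The biadditive pairing `𝒬^∨ × 𝒫 → ℤ` with `(αᵢ^∨, α_j) = a_{ij}` and
`(αᵢ^∨, ω_j) = δ_{ij}`. -/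
def pairQP (A : Fin n → Fin n → ℤ) (x : QvLat n) (lam : PLat n) : ℤ :=
  (∑ a, ∑ b, x a * A a b * lam.1 b) + ∑ a, x a * lam.2 a

/-- The simple reflection `sᵢ` on `𝒫`: `sᵢ α_j = α_j - a_{ij} αᵢ`,
`sᵢ ω_j = ω_j - δ_{ij} αᵢ`. -/
def sP (A : Fin n → Fin n → ℤ) (a : Fin n) (lam : PLat n) : PLat n :=
  (fun j => if j = a then lam.1 a - ((∑ k, A a k * lam.1 k) + lam.2 a) else lam.1 j,
   lam.2)

/-- The simple reflection `sᵢ^∨` on `𝒬^∨`: `sᵢ^∨ α_j^∨ = α_j^∨ - a_{ji} αᵢ^∨`. -/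
def sQ (A : Fin n → Fin n → ℤ) (a : Fin n) (x : QvLat n) : QvLat n :=
  fun j => if j = a then x a - ∑ k, A k a * x k else x j

/-- `w_ℓ = s_{i₁} ∘ ⋯ ∘ s_{i_ℓ}` on `𝒫` (with `w₀ = id`). -/
def wP (A : Fin n → Fin n → ℤ) (ii : ℕ → Fin n) : ℕ → PLat n → PLat n
  | 0 => id
  | (l+1) => wP A ii l ∘ sP A (ii (l+1))

/-- `w_ℓ^∨ = s_{i₁}^∨ ∘ ⋯ ∘ s_{i_ℓ}^∨` on `𝒬^∨` (with `w₀ = id`). -/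
def wQ (A : Fin n → Fin n → ℤ) (ii : ℕ → Fin n) : ℕ → QvLat n → QvLat n
  | 0 => id
  | (l+1) => wQ A ii l ∘ sQ A (ii (l+1))

/-- `k⁺ = min({ℓ : k < ℓ ≤ m, i_ℓ = i_k} ∪ {m+1})`. -/
noncomputable def kplus (ii : ℕ → Fin n) (m k : ℕ) : ℕ :=
  sInf ({l | k < l ∧ l ≤ m ∧ ii l = ii k} ∪ {m+1})

/-- `k⁻ = max({ℓ : 1 ≤ ℓ < k, i_ℓ = i_k} ∪ {0})`. -/
noncomputable def kminus (ii : ℕ → Fin n) (k : ℕ) : ℕ :=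
  sSup ({l | 1 ≤ l ∧ l < k ∧ ii l = ii k} ∪ {0})

/-- The standard basis vector `ε_k` of `ℤ^m` (1-based index), with the convention
`ε_s = 0` for `s ∉ {1,…,m}`. -/
def eps (m k : ℕ) : Fin m → ℤ := fun j => if (j : ℕ) + 1 = k then 1 else 0

/-- `φ_𝐢(ε_k) = -ε_k - ε_{k⁻} - ∑_{ℓ : ℓ < k < ℓ⁺} a_{i_ℓ i_k} ε_ℓ`. -/
noncomputable def phiE (A : Fin n → Fin n → ℤ) (ii : ℕ → Fin n) (m k : ℕ) :
    Fin m → ℤ :=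
  -(eps m k) - eps m (kminus ii k)
    - ∑ l : Fin m, (if (l:ℕ)+1 < k ∧ k < kplus ii m ((l:ℕ)+1)
        then A (ii ((l:ℕ)+1)) (ii k) else 0) • eps m ((l:ℕ)+1)

/-- The endomorphism `φ_𝐢` of `ℤ^m`, extended additively from its values on the basis. -/
noncomputable def phiMap (A : Fin n → Fin n → ℤ) (ii : ℕ → Fin n) (m : ℕ)
    (v : Fin m → ℤ) : Fin m → ℤ :=
  ∑ k : Fin m, v k • phiE A ii m ((k:ℕ)+1)

/-- `φ'_𝐢(ε_ℓ) = -∑_{k=1}^{ℓ} (w_k^∨ α_{i_k}^∨, w_ℓ ω_{i_ℓ}) ε_k`. -/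
def phiE' (A : Fin n → Fin n → ℤ) (ii : ℕ → Fin n) (m l : ℕ) : Fin m → ℤ :=
  -∑ k : Fin m, (if (k:ℕ)+1 ≤ l then
      pairQP A (wQ A ii ((k:ℕ)+1) (coroot (ii ((k:ℕ)+1)))) (wP A ii l (omP (ii l)))
    else 0) • eps m ((k:ℕ)+1)

/-- The endomorphism `φ'_𝐢` of `ℤ^m`, extended additively from its values on the basis. -/
def phiMap' (A : Fin n → Fin n → ℤ) (ii : ℕ → Fin n) (m : ℕ)
    (v : Fin m → ℤ) : Fin m → ℤ :=
  ∑ l : Fin m, v l • phiE' A ii m ((l:ℕ)+1)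

/-- `∂_𝐢 ε_k = ε_k - ε_{k⁻}`. -/
noncomputable def derE (ii : ℕ → Fin n) (m k : ℕ) : Fin m → ℤ :=
  eps m k - eps m (kminus ii k)

/-- The endomorphism `∂_𝐢` of `ℤ^m`. -/
noncomputable def derMap (ii : ℕ → Fin n) (m : ℕ) (v : Fin m → ℤ) : Fin m → ℤ :=
  ∑ k : Fin m, v k • derE ii m ((k:ℕ)+1)

/-- `∫_𝐢 ε_k = ε_k + ε_{k⁻} + ε_{(k⁻)⁻} + ⋯` (summing along the chain `k > k⁻ > ⋯ > 0`). -/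
noncomputable def intE (ii : ℕ → Fin n) (m : ℕ) (k : ℕ) : Fin m → ℤ :=
  if h : kminus ii k < k then eps m k + intE ii m (kminus ii k) else eps m k
termination_by k
decreasing_by exact h

/-- The endomorphism `∫_𝐢` of `ℤ^m`. -/
noncomputable def intMap (ii : ℕ → Fin n) (m : ℕ) (v : Fin m → ℤ) : Fin m → ℤ :=
  ∑ k : Fin m, v k • intE ii m ((k:ℕ)+1)

/-- The skew-symmetric biadditive form `Λ_𝐢` on `ℤ^m` with
`Λ_𝐢(ε_k, ε_ℓ) = sgn(k-ℓ) c_{i_k i_ℓ}` where `c_{ij} = dᵢ a_{ij}`. -/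
def LamF (A : Fin n → Fin n → ℤ) (d : Fin n → ℤ) (ii : ℕ → Fin n) (m : ℕ)
    (a b : Fin m → ℤ) : ℤ :=
  ∑ k : Fin m, ∑ l : Fin m, a k * b l *
    ((((k:ℕ):ℤ) - ((l:ℕ):ℤ)).sign *
      (d (ii ((k:ℕ)+1)) * A (ii ((k:ℕ)+1)) (ii ((l:ℕ)+1))))

/-- The biadditive form `Φ_𝐢` on `ℤ^m` with `Φ_𝐢(ε_k,ε_ℓ) = -d_{i_k}` if `k = ℓ`,
`= -c_{i_ℓ i_k}` if `ℓ < k`, and `= 0` if `ℓ > k`. -/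
def PhiF (A : Fin n → Fin n → ℤ) (d : Fin n → ℤ) (ii : ℕ → Fin n) (m : ℕ)
    (a b : Fin m → ℤ) : ℤ :=
  ∑ k : Fin m, ∑ l : Fin m, a k * b l *
    (if (k:ℕ) = (l:ℕ) then -(d (ii ((k:ℕ)+1)))
     else if (l:ℕ) < (k:ℕ) then
       -(d (ii ((l:ℕ)+1)) * A (ii ((l:ℕ)+1)) (ii ((k:ℕ)+1)))
     else 0)

/-- The entry `b_{pk}` of the exchange matrix `B̃_𝐢`. -/
noncomputable def bcoef (A : Fin n → Fin n → ℤ) (ii : ℕ → Fin n) (m p k : ℕ) : ℤ :=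
  if p = kminus ii k then -1
  else if p < k ∧ k < kplus ii m p ∧ kplus ii m p < kplus ii m k then
    -(A (ii p) (ii k))
  else if k < p ∧ p < kplus ii m k ∧ kplus ii m k < kplus ii m p then
    A (ii p) (ii k)
  else if p = kplus ii m k then 1
  else 0

/-- The column `𝐛^k = ∑_p b_{pk} ε_p ∈ ℤ^m` of the exchange matrix. -/
noncomputable def bvec (A : Fin n → Fin n → ℤ) (ii : ℕ → Fin n) (m k : ℕ) :
    Fin m → ℤ :=
  fun p => bcoef A ii m ((p:ℕ)+1) k

/-- `ρ_𝐢⁺(ε_k) = ε_k + ∑_{ℓ<k, ℓ⁺=m+1} a_{i_ℓ i_k} ε_ℓ`. -/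
noncomputable def rhoPE (A : Fin n → Fin n → ℤ) (ii : ℕ → Fin n) (m k : ℕ) :
    Fin m → ℤ :=
  eps m k + ∑ l : Fin m, (if (l:ℕ)+1 < k ∧ kplus ii m ((l:ℕ)+1) = m+1
      then A (ii ((l:ℕ)+1)) (ii k) else 0) • eps m ((l:ℕ)+1)

/-- `ρ_𝐢⁻(ε_k) = ε_k - ∑_{ℓ≤k, ℓ⁺=m+1} a_{i_ℓ i_k} ε_ℓ`. -/
noncomputable def rhoME (A : Fin n → Fin n → ℤ) (ii : ℕ → Fin n) (m k : ℕ) :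
    Fin m → ℤ :=
  eps m k - ∑ l : Fin m, (if (l:ℕ)+1 ≤ k ∧ kplus ii m ((l:ℕ)+1) = m+1
      then A (ii ((l:ℕ)+1)) (ii k) else 0) • eps m ((l:ℕ)+1)

/-- The endomorphism `ρ_𝐢⁺` of `ℤ^m`. -/
noncomputable def rhoPMap (A : Fin n → Fin n → ℤ) (ii : ℕ → Fin n) (m : ℕ)
    (v : Fin m → ℤ) : Fin m → ℤ :=
  ∑ k : Fin m, v k • rhoPE A ii m ((k:ℕ)+1)

/-- The endomorphism `ρ_𝐢⁻` of `ℤ^m`. -/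
noncomputable def rhoMMap (A : Fin n → Fin n → ℤ) (ii : ℕ → Fin n) (m : ℕ)
    (v : Fin m → ℤ) : Fin m → ℤ :=
  ∑ k : Fin m, v k • rhoME A ii m ((k:ℕ)+1)

/-- `𝐚_λ = -∑_{k=1}^m (w_k^∨ α_{i_k}^∨, w_m λ) ε_k ∈ ℤ^m`. -/
def avec (A : Fin n → Fin n → ℤ) (ii : ℕ → Fin n) (m : ℕ) (lam : PLat n) :
    Fin m → ℤ :=
  fun k => -(pairQP A (wQ A ii ((k:ℕ)+1) (coroot (ii ((k:ℕ)+1)))) (wP A ii m lam))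

/-- `|𝐚| = ∑_{k=1}^m a_k α_{i_k} ∈ 𝒬 ⊆ 𝒫`. -/
def degP (ii : ℕ → Fin n) (m : ℕ) (a : Fin m → ℤ) : PLat n :=
  (fun j => ∑ k : Fin m, if ii ((k:ℕ)+1) = j then a k else 0, 0)

/-- The pairing `(μ, λ) = ∑ mᵢ dᵢ (αᵢ^∨, λ)` for `μ = ∑ mᵢ αᵢ ∈ 𝒬` and `λ ∈ 𝒫`
(induced by identifying `αᵢ` with `dᵢ αᵢ^∨`). -/
def pairAl (A : Fin n → Fin n → ℤ) (d : Fin n → ℤ) (mu lam : PLat n) : ℤ :=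
  ∑ j, mu.1 j * (d j * pairQP A (coroot j) lam)


/-! The pairing is `W`-invariant, so `(w_k^∨ α_{i_k}^∨, w_m ω_{i_ℓ})` can be computed
after stripping `w_k` from both sides. Since `i_ℓ` does not recur after `ℓ`, the reflections
`s_{i_t}` with `t > ℓ` fix `ω_{i_ℓ}`; hence `w_m ω_{i_ℓ} = w_k ω_{i_ℓ} = w_ℓ ω_{i_ℓ}` for `ℓ ≤ k ≤ m`,
and for `k > ℓ` the coordinate reduces to `(α_{i_k}^∨, ω_{i_ℓ}) = 0`. -/

section Pairing

variable (A : Fin n → Fin n → ℤ)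

lemma pairQP_sub_smul_left (x y : QvLat n) (c : ℤ) (lam : PLat n) :
    pairQP A (x - c • y) lam = pairQP A x lam - c * pairQP A y lam := by
  simp only [pairQP, Pi.sub_apply, Pi.smul_apply, smul_eq_mul, sub_mul, Finset.sum_sub_distrib,
    Finset.mul_sum, mul_add]
  simp only [mul_assoc]
  ring

lemma pairQP_sub_smul_right (x : QvLat n) (lam mu : PLat n) (c : ℤ) :
    pairQP A x (lam - c • mu) = pairQP A x lam - c * pairQP A x mu := by
  have hc : ∀ a b, x a * A a b * (c * mu.1 b) = c * (x a * A a b * mu.1 b) := fun _ _ => by ring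
  have hc' : ∀ a, x a * (c * mu.2 a) = c * (x a * mu.2 a) := fun _ => by ring
  simp only [pairQP, Prod.fst_sub, Prod.snd_sub, Prod.smul_fst, Prod.smul_snd, Pi.sub_apply,
    Pi.smul_apply, smul_eq_mul, mul_sub, Finset.sum_sub_distrib, hc, hc', ← Finset.mul_sum]
  ring

lemma pairQP_alP (x : QvLat n) (a : Fin n) : pairQP A x (alP a) = ∑ k, x k * A k a := by
  simp [pairQP, alP]

lemma pairQP_coroot (a : Fin n) (lam : PLat n) :
    pairQP A (coroot a) lam = ∑ k, A a k * lam.1 k + lam.2 a := by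
  simp [pairQP, coroot]

lemma sQ_eq_sub (a : Fin n) (x : QvLat n) :
    sQ A a x = x - (∑ k, x k * A k a) • coroot a := by
  funext j
  by_cases h : j = a <;> simp [sQ, coroot, h, mul_comm]

lemma sP_eq_sub (a : Fin n) (lam : PLat n) :
    sP A a lam = lam - pairQP A (coroot a) lam • alP a := by
  rw [pairQP_coroot]
  refine Prod.ext (funext fun j => ?_) (by simp [sP, alP])
  by_cases h : j = a <;> simp [sP, alP, h]

lemma pairQP_sQ_sP (hA : ∀ i, A i i = 2) (a : Fin n) (x : QvLat n) (lam : PLat n) :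
    pairQP A (sQ A a x) (sP A a lam) = pairQP A x lam := by
  have h2 : pairQP A (coroot a) (alP a) = 2 := by simp [pairQP_alP, coroot, hA]
  rw [sQ_eq_sub, sP_eq_sub, pairQP_sub_smul_left, pairQP_sub_smul_right, pairQP_sub_smul_right, h2, pairQP_alP]
  ring

lemma pairQP_wQ_wP (hA : ∀ i, A i i = 2) (ii : ℕ → Fin n) (t : ℕ) (x : QvLat n)
    (lam : PLat n) : pairQP A (wQ A ii t x) (wP A ii t lam) = pairQP A x lam := by
  induction t generalizing x lam with
  | zero => rfl
  | succ t ih => exact (ih _ _).trans (pairQP_sQ_sP A hA _ x lam)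

lemma pairQP_coroot_omP_of_ne {j q : Fin n} (h : j ≠ q) : pairQP A (coroot j) (omP q) = 0 := by
  simp [pairQP_coroot, omP, h]

lemma sP_omP_of_ne {a j : Fin n} (h : a ≠ j) : sP A a (omP j) = omP j := by
  rw [sP_eq_sub, pairQP_coroot_omP_of_ne A h, zero_smul, sub_zero]

lemma wP_omP_of_forall_ne (ii : ℕ → Fin n) (j : Fin n) {l s : ℕ} (hls : l ≤ s)
    (h : ∀ t, l < t → t ≤ s → ii t ≠ j) : wP A ii s (omP j) = wP A ii l (omP j) := by
  induction s, hls using Nat.le_induction with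
  | base => rfl
  | succ s hls ih =>
    change wP A ii s (sP A (ii (s + 1)) (omP j)) = _
    rw [sP_omP_of_ne A (h _ (by omega) le_rfl), ih fun t h1 h2 => h t h1 (by omega)]

end Pairing

lemma ne_of_kplus_eq {ii : ℕ → Fin n} {m l t : ℕ} (hl : kplus ii m l = m + 1) (hlt : l < t)
    (htm : t ≤ m) : ii t ≠ ii l := by
  intro h
  have : kplus ii m l ≤ t := Nat.sInf_le (Or.inl ⟨hlt, htm, h⟩)
  omega

lemma sum_smul_eps_apply {m : ℕ} (c : Fin m → ℤ) (p : Fin m) :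
    (∑ k : Fin m, c k • eps m ((k : ℕ) + 1)) p = c p := by
  simp [eps, Fin.val_inj]

lemma phiMap'_eps {A : Fin n → Fin n → ℤ} {ii : ℕ → Fin n} {m l : ℕ} (hl1 : 1 ≤ l)
    (hl2 : l ≤ m) : phiMap' A ii m (eps m l) = phiE' A ii m l := by
  obtain ⟨k, rfl⟩ : ∃ k : Fin m, l = (k : ℕ) + 1 := ⟨⟨l - 1, by omega⟩, by simp; omega⟩
  simp [phiMap', eps, Fin.val_inj]

theorem phi'_eps_of_not_ex_general {n m : ℕ}
    (A : Fin n → Fin n → ℤ)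
    (hA : ∀ i, A i i = 2)
    (ii : ℕ → Fin n)
    (l : ℕ) (hl1 : 1 ≤ l) (hl2 : l ≤ m) (hl3 : kplus ii m l = m + 1) :
    phiMap' A ii m (eps m l) = avec A ii m (omP (ii l)) := by
  have hstab : ∀ s, l ≤ s → s ≤ m → wP A ii s (omP (ii l)) = wP A ii l (omP (ii l)) :=
    fun s hls hsm => wP_omP_of_forall_ne A ii _ hls fun t h1 h2 => ne_of_kplus_eq hl3 h1 (by omega)
  funext p
  rw [phiMap'_eps hl1 hl2, phiE', Pi.neg_apply, sum_smul_eps_apply, avec, hstab m hl2 le_rfl]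
  split_ifs with hp
  · rfl
  · have hlp : l < (p : ℕ) + 1 := by omega
    rw [← hstab _ hlp.le p.isLt, pairQP_wQ_wP A hA,
      pairQP_coroot_omP_of_ne A (ne_of_kplus_eq hl3 hlp p.isLt), neg_zero]

/-- if `ℓ⁺ = m+1` then `φ'_𝐢(ε_ℓ) = 𝐚_{ω_{i_ℓ}}`. -/
theorem phi'_eps_of_not_ex {n m : ℕ} (hm : 1 ≤ m)
    (A : Fin n → Fin n → ℤ) (d : Fin n → ℤ)
    (hA : ∀ i, A i i = 2) (hd : ∀ i, 0 < d i)
    (hsym : ∀ i j, d i * A i j = d j * A j i)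
    (ii : ℕ → Fin n)
    (l : ℕ) (hl1 : 1 ≤ l) (hl2 : l ≤ m) (hl3 : kplus ii m l = m + 1) :
    phiMap' A ii m (eps m l) = avec A ii m (omP (ii l)) :=
  phi'_eps_of_not_ex_general A hA ii l hl1 hl2 hl3
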